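/- arXiv:0805.0380 — 2 statements merged into one kernel-verified Lean document; each statement's English description precedes it below -/
import Mathlib

section
/- Fix n ≥ 1, T > 0, ε₀ ∈ (0,1], and a differentiable function φ : ℝ → ℝ with ε₀ ≤ φ'(r) ≤ ε₀^{−1} for all r ∈ ℝ. Let u : [0,T] × V_n → ℝ be such that t ↦ u(t,x) is differentiable for each x ∈ V_n, u(t,a_i) = 0 for all t ∈ [0,T] and i = 0,1,2, and ∂_t u(t,x) = Δ_n (φ∘u(t,·))(x) for every x ∈ V_n∖V₀ and t ∈ [0,T]. Then the energy estimate holds: ‖u(T,·)‖²_{0,n} + 2ε₀ ∫₀^T E_n(u(t,·), u(t,·)) dt ≤ ‖u(0,·)‖²_{0,n}. -/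
open scoped Classical
open Real Set

noncomputable section

abbrev Pt : Type := ℝ × ℝ

/-- The three corners of the unit triangle. -/
def sierA : Fin 3 → Pt
  | 0 => (0, 0)
  | 1 => (1 / 2, Real.sqrt 3 / 2)
  | 2 => (1, 0)

/-- The three contractions `φᵢ(x) = (x + aᵢ)/2`. -/
def ctr (i : Fin 3) (x : Pt) : Pt :=
  ((x.1 + (sierA i).1) / 2, (x.2 + (sierA i).2) / 2)

/-- The vertex sets `V n`. -/
def V : ℕ → Finset Pt
  | 0 => {sierA 0, sierA 1, sierA 2}
  | n + 1 => (V n).image (ctr 0) ∪ (V n).image (ctr 1) ∪ (V n).image (ctr 2)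

/-- The (ordered) edge sets: `(x, y) ∈ Ed n` iff `{x,y} ∈ E_n`; each undirected
edge appears with both orientations. -/
def Ed : ℕ → Finset (Pt × Pt)
  | 0 => (V 0 ×ˢ V 0).filter fun p => p.1 ≠ p.2
  | n + 1 => Finset.univ.biUnion fun i : Fin 3 => (Ed n).image fun p => (ctr i p.1, ctr i p.2)

/-- `V* = ⋃ n, V n`. -/
def Vstar : Set Pt := ⋃ n, (V n : Set Pt)

/-- The level-`n` energy `E_n(u,u) = (5/3)^n Σ_{{x,y} ∈ E_n} (u y - u x)²`
(each undirected edge counted once, whence the division by 2). -/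
def En (n : ℕ) (u : Pt → ℝ) : ℝ :=
  (5 / 3 : ℝ) ^ n * (∑ p ∈ Ed n, (u p.2 - u p.1) ^ 2) / 2

/-- The discrete Laplacian `Δ_n u (x) = 5^n Σ_{y ∼ₙ x} (u y - u x)`. -/
def lap (n : ℕ) (u : Pt → ℝ) (x : Pt) : ℝ :=
  (5 : ℝ) ^ n * ∑ p ∈ (Ed n).filter (fun p => p.1 = x), (u p.2 - u p.1)

/-! Multiplying the equation at `x ∈ V_n ∖ V₀` by `u(t,x)` and summing gives
`d/dt Σ u² = 2 Σ_{V_n} u Δ_n φ(u)`, the boundary vertices contributing nothing since `u = 0` there.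
Summation by parts turns the right side into `-5^n Σ_{edges} (u y - u x)(φ(u y) - φ(u x))`, and
the mean value theorem with `φ' ≥ ε₀` bounds each term below by `ε₀ (u y - u x)²`, so
`d/dt Σ u² ≤ -2 ε₀ 3^n E_n(u)`; integrate over `[0, T]`. -/

lemma ctr_mem_V {n : ℕ} {y : Pt} (hy : y ∈ V n) (i : Fin 3) : ctr i y ∈ V (n + 1) := by
  simp only [V, Finset.mem_union, Finset.mem_image]
  fin_cases i
  · exact Or.inl (Or.inl ⟨y, hy, rfl⟩)
  · exact Or.inl (Or.inr ⟨y, hy, rfl⟩)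
  · exact Or.inr ⟨y, hy, rfl⟩

lemma mem_V_of_mem_Ed {n : ℕ} {p : Pt × Pt} (hp : p ∈ Ed n) : p.1 ∈ V n ∧ p.2 ∈ V n := by
  induction n generalizing p with
  | zero =>
    simp only [Ed, Finset.mem_filter, Finset.mem_product] at hp
    exact hp.1
  | succ n ih =>
    simp only [Ed, Finset.mem_biUnion, Finset.mem_image] at hp
    obtain ⟨i, -, q, hq, rfl⟩ := hp
    exact ⟨ctr_mem_V (ih hq).1 i, ctr_mem_V (ih hq).2 i⟩

lemma swap_mem_Ed {n : ℕ} {p : Pt × Pt} (hp : p ∈ Ed n) : p.swap ∈ Ed n := by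
  induction n generalizing p with
  | zero =>
    simp only [Ed, Finset.mem_filter, Finset.mem_product] at hp ⊢
    exact ⟨hp.1.symm, hp.2.symm⟩
  | succ n ih =>
    simp only [Ed, Finset.mem_biUnion, Finset.mem_image] at hp ⊢
    obtain ⟨i, -, q, hq, rfl⟩ := hp
    exact ⟨i, Finset.mem_univ i, q.swap, ih hq, rfl⟩

/-- Discrete Green formula; the `/ 2` is because each edge of `E` occurs with both orientations. -/
theorem sum_mul_sum_incident_eq {α : Type*} [DecidableEq α] {S : Finset α} {E : Finset (α × α)}
    (hfst : ∀ p ∈ E, p.1 ∈ S) (hswap : ∀ p ∈ E, p.swap ∈ E) (f g : α → ℝ) :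
    ∑ x ∈ S, g x * ∑ p ∈ E with p.1 = x, (f p.2 - f p.1)
      = -(∑ p ∈ E, (g p.2 - g p.1) * (f p.2 - f p.1)) / 2 := by
  have hfiber : ∑ x ∈ S, g x * ∑ p ∈ E with p.1 = x, (f p.2 - f p.1)
      = ∑ p ∈ E, g p.1 * (f p.2 - f p.1) := by
    rw [← Finset.sum_fiberwise_of_maps_to hfst]
    refine Finset.sum_congr rfl fun x _ => ?_
    rw [Finset.mul_sum]
    exact Finset.sum_congr rfl fun p hp => by rw [(Finset.mem_filter.mp hp).2]
  have hsymm : ∑ p ∈ E, g p.1 * (f p.2 - f p.1) = ∑ p ∈ E, g p.2 * (f p.1 - f p.2) :=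
    Finset.sum_nbij' Prod.swap Prod.swap hswap hswap (fun _ _ => rfl) (fun _ _ => rfl)
      (fun _ _ => rfl)
  rw [hfiber, eq_div_iff two_ne_zero, mul_two]
  nth_rewrite 2 [hsymm]
  rw [← Finset.sum_add_distrib, ← Finset.sum_neg_distrib]
  exact Finset.sum_congr rfl fun p _ => by ring

theorem sum_mul_lap (n : ℕ) (f g : Pt → ℝ) :
    ∑ x ∈ V n, g x * lap n f x
      = -(5 : ℝ) ^ n * (∑ p ∈ Ed n, (g p.2 - g p.1) * (f p.2 - f p.1)) / 2 := by
  simp only [lap, mul_left_comm (g _) ((5 : ℝ) ^ n), ← Finset.mul_sum]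
  rw [sum_mul_sum_incident_eq (fun p hp => (mem_V_of_mem_Ed hp).1) (fun p hp => swap_mem_Ed hp)]
  ring

lemma mul_sq_sub_le_of_le_deriv {φ : ℝ → ℝ} (hφ : Differentiable ℝ φ) {ε : ℝ}
    (hε : ∀ r, ε ≤ deriv φ r) (a b : ℝ) : ε * (b - a) ^ 2 ≤ (φ b - φ a) * (b - a) := by
  rcases le_total a b with hab | hba
  · nlinarith [mul_sub_le_image_sub_of_le_deriv hφ hε hab]
  · nlinarith [mul_sub_le_image_sub_of_le_deriv hφ hε hba]

theorem sum_mul_lap_comp_le {φ : ℝ → ℝ} (hφ : Differentiable ℝ φ) {ε : ℝ}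
    (hε : ∀ r, ε ≤ deriv φ r) (n : ℕ) (v : Pt → ℝ) :
    ∑ x ∈ V n, v x * lap n (fun z => φ (v z)) x ≤ -(ε * 3 ^ n * En n v) := by
  have hmono : ε * ∑ p ∈ Ed n, (v p.2 - v p.1) ^ 2
      ≤ ∑ p ∈ Ed n, (v p.2 - v p.1) * (φ (v p.2) - φ (v p.1)) := by
    rw [Finset.mul_sum]
    exact Finset.sum_le_sum fun p _ => by
      linarith [mul_sq_sub_le_of_le_deriv hφ hε (v p.1) (v p.2)]
  rw [sum_mul_lap, En, div_pow]
  field_simp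
  nlinarith [pow_pos (by norm_num : (0 : ℝ) < 5) n]

lemma continuousOn_En {n : ℕ} {u : ℝ → Pt → ℝ} {s : Set ℝ}
    (hu : ∀ z ∈ V n, ContinuousOn (fun t => u t z) s) : ContinuousOn (fun t => En n (u t)) s := by
  refine (continuousOn_const.mul (continuousOn_finsetSum _ fun p hp => ?_)).div_const _
  exact ((hu _ (mem_V_of_mem_Ed hp).2).sub (hu _ (mem_V_of_mem_Ed hp).1)).pow 2

lemma sum_sdiff_V_zero_eq {n : ℕ} {w : Pt → ℝ} (hw : ∀ x ∈ V 0, w x = 0) :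
    ∑ x ∈ V n \ V 0, w x = ∑ x ∈ V n, w x :=
  Finset.sum_subset Finset.sdiff_subset fun x hx hx' =>
    hw x (by simpa [hx] using hx')

theorem discrete_energy_estimate_general (n : ℕ)
    (T : ℝ) (hT : 0 < T) (ε₀ : ℝ)
    (phi : ℝ → ℝ) (hphi : Differentiable ℝ phi)
    (hphi' : ∀ r : ℝ, ε₀ ≤ deriv phi r ∧ deriv phi r ≤ ε₀⁻¹)
    (u : ℝ → Pt → ℝ)
    (hbd : ∀ t ∈ Set.Icc (0 : ℝ) T, ∀ i : Fin 3, u t (sierA i) = 0)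
    (hode : ∀ x ∈ (V n : Set Pt), x ∉ (V 0 : Set Pt) →
      ∀ t ∈ Set.Icc (0 : ℝ) T,
        HasDerivAt (fun s => u s x) (lap n (fun z => phi (u t z)) x) t) :
    (∑ x ∈ V n, u T x ^ 2) / 3 ^ n + 2 * ε₀ * ∫ t in (0 : ℝ)..T, En n (u t)
      ≤ (∑ x ∈ V n, u 0 x ^ 2) / 3 ^ n := by
  have hzero : ∀ t ∈ Icc 0 T, ∀ x ∈ V 0, u t x = 0 := by
    intro t ht x hx
    simp only [V, Finset.mem_insert, Finset.mem_singleton] at hx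
    rcases hx with rfl | rfl | rfl <;> exact hbd t ht _
  have hderiv : ∀ t ∈ Icc 0 T, HasDerivAt (fun s => ∑ x ∈ V n \ V 0, u s x ^ 2)
      (2 * ∑ x ∈ V n, u t x * lap n (fun z => phi (u t z)) x) t := by
    intro t ht
    rw [← sum_sdiff_V_zero_eq fun x hx => by rw [hzero t ht x hx, zero_mul], Finset.mul_sum]
    refine HasDerivAt.fun_sum fun x hx => ?_
    obtain ⟨hxn, hx0⟩ := Finset.mem_sdiff.mp hx
    simpa [mul_assoc] using (hode x hxn hx0 t ht).fun_pow 2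
  have hcont : ∀ z ∈ V n, ContinuousOn (fun t => u t z) (Icc 0 T) := by
    intro z hz t ht
    by_cases hz0 : z ∈ V 0
    · exact (continuousOn_const.congr fun s hs => hzero s hs z hz0) t ht
    · exact (hode z hz hz0 t ht).continuousAt.continuousWithinAt
  -- Only the minorant `2 ε₀ 3^n E_n` has to be integrable here, not the derivative itself.
  have hdiss : ∫ t in (0 : ℝ)..T, 2 * ε₀ * 3 ^ n * En n (u t)
      ≤ -∑ x ∈ V n \ V 0, u T x ^ 2 - -∑ x ∈ V n \ V 0, u 0 x ^ 2 :=
    intervalIntegral.integral_le_sub_of_hasDeriv_right_of_le hT.le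
      (fun t ht => (hderiv t ht).continuousAt.continuousWithinAt.neg)
      (fun t ht => (hderiv t (Ioo_subset_Icc_self ht)).neg.hasDerivWithinAt)
      (continuousOn_const.mul (continuousOn_En hcont)).integrableOn_Icc
      fun t _ => by
        linarith [sum_mul_lap_comp_le hphi (fun r => (hphi' r).1) n (u t)]
  have hsq : ∀ t ∈ Icc 0 T, ∑ x ∈ V n \ V 0, u t x ^ 2 = ∑ x ∈ V n, u t x ^ 2 := fun t ht =>
    sum_sdiff_V_zero_eq fun x hx => by rw [hzero t ht x hx, sq, zero_mul]
  rw [intervalIntegral.integral_const_mul, hsq T ⟨hT.le, le_rfl⟩, hsq 0 ⟨le_rfl, hT.le⟩] at hdiss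
  rw [div_add' _ _ _ (by positivity), div_le_div_iff_of_pos_right (by positivity)]
  linarith

/-- Energy estimate for the finite-difference scheme for `∂_t u = Δ φ(u)`
with zero Dirichlet boundary condition:
`‖u(T,·)‖²_{0,n} + 2ε₀ ∫₀^T E_n(u(t,·),u(t,·)) dt ≤ ‖u(0,·)‖²_{0,n}`. -/
theorem discrete_energy_estimate (n : ℕ) (hn : 1 ≤ n)
    (T : ℝ) (hT : 0 < T) (ε₀ : ℝ) (hε₀ : 0 < ε₀) (hε₀' : ε₀ ≤ 1)
    (phi : ℝ → ℝ) (hphi : Differentiable ℝ phi)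
    (hphi' : ∀ r : ℝ, ε₀ ≤ deriv phi r ∧ deriv phi r ≤ ε₀⁻¹)
    (u : ℝ → Pt → ℝ)
    (hbd : ∀ t ∈ Set.Icc (0 : ℝ) T, ∀ i : Fin 3, u t (sierA i) = 0)
    (hode : ∀ x ∈ (V n : Set Pt), x ∉ (V 0 : Set Pt) →
      ∀ t ∈ Set.Icc (0 : ℝ) T,
        HasDerivAt (fun s => u s x) (lap n (fun z => phi (u t z)) x) t) :
    (∑ x ∈ V n, u T x ^ 2) / 3 ^ n + 2 * ε₀ * ∫ t in (0 : ℝ)..T, En n (u t)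
      ≤ (∑ x ∈ V n, u 0 x ^ 2) / 3 ^ n :=
  discrete_energy_estimate_general n T hT ε₀ phi hphi hphi' u hbd hode

end
end

section
/- Assume g satisfies condition (SG): sup_k |g(k+1) − g(k)| < +∞, and there exist k₀ ∈ ℕ and a₀ > 0 such that g(k+l) − g(k) ≥ a₀ for every k ≥ 0 and every l > k₀. Then Z(φ) < +∞ for every φ ≥ 0 (i.e. φ* = +∞), and ρ(φ) → +∞ as φ → +∞ (i.e. ρ* = +∞). -/
/-!
Iterating `g (k + k₀ + 1) ≥ g k + a₀` shows that `g` grows at least linearly, so the ratio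
`φ / g (k + 1)` of consecutive terms of `Z(φ)` tends to `0` and the series converges for
every `φ`. For the density, fix `N`: the terms with `k ≥ N` contribute at least `N` times
their weight to `Σ k φ^k / g(k)!`, while the terms with `k < N` are `O(φ^(N-1))` against
`Z(φ) ≥ φ^N / g(N)!`. Hence `ρ(φ) ≥ N (1 - c_N / φ)` for `φ ≥ 1`, with
`c_N = g(N)! Σ_{k<N} 1 / g(k)!`, and `ρ(φ) → ∞`.
-/

open scoped Classical

noncomputable section

/-- `g(k)! = g(1) ⋯ g(k)`, with `g(0)! = 1`. -/
def gfact (g : ℕ → ℝ) (k : ℕ) : ℝ := ∏ j ∈ Finset.range k, g (j + 1)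

/-- The mean particle density `ρ(φ) = Z(φ)⁻¹ Σ_k k φ^k / g(k)!`. -/
def density (g : ℕ → ℝ) (φ : ℝ) : ℝ :=
  (∑' k : ℕ, (k : ℝ) * φ ^ k / gfact g k) / ∑' k : ℕ, φ ^ k / gfact g k

open Filter Topology Finset

theorem tendsto_atTop_of_add_le_apply_add {f : ℕ → ℝ} {p : ℕ} {a : ℝ} (hp : 0 < p)
    (ha : 0 < a) (hf : ∀ k, f k + a ≤ f (k + p)) : Tendsto f atTop atTop := by
  set L := -∑ r ∈ range p, |f r|
  have hL : ∀ r < p, L ≤ f r := fun r hr => by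
    have := single_le_sum (fun i _ => abs_nonneg (f i)) (mem_range.2 hr)
    linarith [neg_abs_le (f r)]
  have hiter : ∀ r q : ℕ, f r + q * a ≤ f (r + p * q) := by
    intro r q
    induction q with
    | zero => simp
    | succ q ih =>
      have := hf (r + p * q)
      rw [Nat.mul_succ, ← add_assoc]
      push_cast
      linarith
  have hbound : ∀ m, L + (m / p : ℕ) * a ≤ f m := fun m => by
    have := hiter (m % p) (m / p)
    rw [Nat.mod_add_div] at this
    linarith [hL _ (Nat.mod_lt m hp)]
  refine tendsto_atTop_mono hbound (tendsto_atTop_add_const_left _ _ ?_)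
  exact (tendsto_natCast_atTop_atTop.comp (Nat.tendsto_div_const_atTop hp.ne')).atTop_mul_const ha

theorem natCast_mul_sub_sum_range_le_tsum {t : ℕ → ℝ} (ht : ∀ k, 0 ≤ t k)
    (hs : Summable t) (hs' : Summable fun k : ℕ => (k : ℝ) * t k) (N : ℕ) :
    N * (∑' k, t k - ∑ k ∈ range N, t k) ≤ ∑' k : ℕ, (k : ℝ) * t k := by
  rw [← hs.sum_add_tsum_nat_add N, ← hs'.sum_add_tsum_nat_add N, add_sub_cancel_left,
    ← tsum_mul_left]
  have hhead : 0 ≤ ∑ k ∈ range N, (k : ℝ) * t k :=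
    sum_nonneg fun k _ => mul_nonneg k.cast_nonneg (ht k)
  have htail : ∑' k, (N : ℝ) * t (k + N) ≤ ∑' k : ℕ, ((k + N : ℕ) : ℝ) * t (k + N) :=
    Summable.tsum_le_tsum (fun k => mul_le_mul_of_nonneg_right (by simp) (ht _))
      (((summable_nat_add_iff N).2 hs).mul_left _) ((summable_nat_add_iff N).2 hs')
  linarith

theorem sum_range_pow_div_mul_le {G : ℕ → ℝ} (hG : ∀ k, 0 ≤ G k) {φ : ℝ} (hφ : 1 ≤ φ)
    (N : ℕ) :
    (∑ k ∈ range N, φ ^ k / G k) * φ ≤ (∑ k ∈ range N, (G k)⁻¹) * φ ^ N := by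
  rw [sum_mul, sum_mul]
  refine sum_le_sum fun k hk => ?_
  rw [div_mul_eq_mul_div, ← pow_succ, inv_mul_eq_div]
  exact div_le_div_of_nonneg_right (pow_le_pow_right₀ hφ (mem_range.1 hk)) (hG k)

section

variable {g : ℕ → ℝ}

theorem gfact_succ (g : ℕ → ℝ) (k : ℕ) : gfact g (k + 1) = gfact g k * g (k + 1) :=
  prod_range_succ _ _

theorem gfact_pos (hg : ∀ k, 1 ≤ k → 0 < g k) (k : ℕ) : 0 < gfact g k :=
  prod_pos fun j _ => hg (j + 1) (Nat.le_add_left 1 j)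

theorem summable_pow_div_gfact (hg : Tendsto g atTop atTop) (φ : ℝ) :
    Summable fun k => φ ^ k / gfact g k := by
  refine summable_of_ratio_norm_eventually_le (r := 1 / 2) (by norm_num) ?_
  filter_upwards [((tendsto_add_atTop_iff_nat 1).2 hg).eventually_ge_atTop (2 * |φ| + 1)]
    with n hn
  have hgpos : 0 < g (n + 1) := by linarith [abs_nonneg φ]
  have hratio : ‖φ / g (n + 1)‖ ≤ 1 / 2 := by
    rw [Real.norm_eq_abs, abs_div, abs_of_pos hgpos, div_le_iff₀ hgpos]
    linarith
  calc ‖φ ^ (n + 1) / gfact g (n + 1)‖ = ‖φ / g (n + 1)‖ * ‖φ ^ n / gfact g n‖ := by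
        rw [← norm_mul, gfact_succ, pow_succ]
        congr 1
        ring
    _ ≤ 1 / 2 * ‖φ ^ n / gfact g n‖ := mul_le_mul_of_nonneg_right hratio (norm_nonneg _)

theorem summable_natCast_mul_pow_div_gfact (hg : Tendsto g atTop atTop) (φ : ℝ) :
    Summable fun k : ℕ => (k : ℝ) * φ ^ k / gfact g k := by
  refine Summable.of_norm_bounded (summable_pow_div_gfact hg (2 * φ)).abs fun k => ?_
  rw [Real.norm_eq_abs, abs_div, abs_div, abs_mul, mul_pow, abs_mul, Nat.abs_cast, abs_pow, abs_pow,
    abs_two]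
  gcongr
  exact_mod_cast Nat.lt_two_pow_self.le

theorem natCast_mul_one_sub_le_density (hg : ∀ k, 1 ≤ k → 0 < g k)
    (htop : Tendsto g atTop atTop) (N : ℕ) {φ : ℝ} (hφ : 1 ≤ φ) :
    N * (1 - (∑ k ∈ range N, (gfact g k)⁻¹) * gfact g N / φ) ≤ density g φ := by
  have hG := gfact_pos hg
  have hφ0 : 0 < φ := by linarith
  have hterm : ∀ k, 0 ≤ φ ^ k / gfact g k := fun k => by have := hG k; positivity
  have hZ := summable_pow_div_gfact htop φ
  set c := (∑ k ∈ range N, (gfact g k)⁻¹) * gfact g N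
  set Z := ∑' k, φ ^ k / gfact g k
  set P := ∑ k ∈ range N, φ ^ k / gfact g k
  have hZN : φ ^ N / gfact g N ≤ Z := hZ.le_tsum N fun k _ => hterm k
  have hZpos : 0 < Z := (div_pos (pow_pos hφ0 N) (hG N)).trans_le hZN
  have hPZ : P * φ ≤ c * Z := calc
    P * φ ≤ (∑ k ∈ range N, (gfact g k)⁻¹) * φ ^ N :=
      sum_range_pow_div_mul_le (fun k => (hG k).le) hφ N
    _ = c * (φ ^ N / gfact g N) := by rw [mul_assoc, mul_div_cancel₀ _ (hG N).ne']
    _ ≤ c * Z := mul_le_mul_of_nonneg_left hZN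
      (mul_nonneg (sum_nonneg fun k _ => (inv_pos.2 (hG k)).le) (hG N).le)
  have hS : N * (Z - P) ≤ ∑' k : ℕ, (k : ℝ) * φ ^ k / gfact g k := by
    simp_rw [mul_div_assoc]
    exact natCast_mul_sub_sum_range_le_tsum hterm hZ
      (by simpa only [mul_div_assoc] using summable_natCast_mul_pow_div_gfact htop φ) N
  rw [density, le_div_iff₀ hZpos]
  calc N * (1 - c / φ) * Z = N * (Z - c * Z / φ) := by ring
    _ ≤ N * (Z - P) := by gcongr; rwa [le_div_iff₀ hφ0]
    _ ≤ _ := hS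

theorem tendsto_density_atTop (hg : ∀ k, 1 ≤ k → 0 < g k) (htop : Tendsto g atTop atTop) :
    Tendsto (density g) atTop atTop := by
  refine tendsto_atTop.2 fun b => ?_
  obtain ⟨N, hN⟩ := exists_nat_gt b
  set c := (∑ k ∈ range N, (gfact g k)⁻¹) * gfact g N
  have hlim : Tendsto (fun φ : ℝ => N * (1 - c / φ)) atTop (𝓝 (N * (1 - 0))) :=
    tendsto_const_nhds.mul (tendsto_const_nhds.sub (tendsto_const_nhds.div_atTop tendsto_id))
  filter_upwards [hlim.eventually (lt_mem_nhds (by simpa using hN)), eventually_ge_atTop 1]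
    with φ hb hφ
  exact hb.le.trans (natCast_mul_one_sub_le_density hg htop N hφ)

end

theorem partition_finite_and_density_tendsto_atTop_general (g : ℕ → ℝ)
    (hg : ∀ k : ℕ, 1 ≤ k → 0 < g k)
    (hSG2 : ∃ k₀ : ℕ, ∃ a₀ : ℝ, 0 < a₀ ∧
      ∀ k l : ℕ, k₀ < l → a₀ ≤ g (k + l) - g k) :
    (∀ φ : ℝ, 0 ≤ φ → Summable fun k : ℕ => φ ^ k / gfact g k) ∧
    Filter.Tendsto (density g) Filter.atTop Filter.atTop := by
  obtain ⟨k₀, a₀, ha₀, hgrowth⟩ := hSG2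
  have htop : Tendsto g atTop atTop :=
    tendsto_atTop_of_add_le_apply_add k₀.succ_pos ha₀ fun k => by
      linarith [hgrowth k (k₀ + 1) k₀.lt_succ_self]
  exact ⟨fun φ _ => summable_pow_div_gfact htop φ, tendsto_density_atTop hg htop⟩

/-- Under condition (SG) — bounded increments `sup_k |g(k+1) − g(k)| < ∞` and
`g(k+l) − g(k) ≥ a₀` for all `k` and all `l > k₀` — the partition function
`Z(φ) = Σ_k φ^k/g(k)!` is finite (the series is summable) for every `φ ≥ 0`,
i.e. `φ* = +∞`, and `ρ(φ) → +∞` as `φ → +∞`, i.e. `ρ* = +∞`. -/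
theorem partition_finite_and_density_tendsto_atTop (g : ℕ → ℝ)
    (hg0 : g 0 = 0) (hg : ∀ k : ℕ, 1 ≤ k → 0 < g k)
    (hSG1 : ∃ C : ℝ, ∀ k : ℕ, |g (k + 1) - g k| ≤ C)
    (hSG2 : ∃ k₀ : ℕ, ∃ a₀ : ℝ, 0 < a₀ ∧
      ∀ k l : ℕ, k₀ < l → a₀ ≤ g (k + l) - g k) :
    (∀ φ : ℝ, 0 ≤ φ → Summable fun k : ℕ => φ ^ k / gfact g k) ∧
    Filter.Tendsto (density g) Filter.atTop Filter.atTop :=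
  partition_finite_and_density_tendsto_atTop_general g hg hSG2

end
end
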